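/- arXiv:1507.08771 — 4 statements merged into one kernel-verified Lean document; each statement's English description precedes it below -/
import Mathlib

section
/- Let E be a complex Hilbert space, let h be an invertible bounded linear operator on E, and let (hₙ)ₙ∈ℕ be a sequence of invertible bounded linear operators on E such that limₙ→∞ ‖h hₙ⁻¹ − 1‖ = 0. Then there exists a sequence (εₙ)ₙ∈ℕ of nonnegative real numbers converging to 0 such that for every n ∈ ℕ and every bounded linear operator x on E one has |‖hₙ x hₙ‖ − ‖h x h‖| ≤ εₙ · ‖h x h‖. -/
/-- If `(hₙ)` is a sequence of invertible bounded operators on a complex Hilbert space `E`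
with `‖h hₙ⁻¹ − 1‖ → 0`, then there is a nonnegative sequence `εₙ → 0` with
`|‖hₙ x hₙ‖ − ‖h x h‖| ≤ εₙ ‖h x h‖` for all `n` and all bounded operators `x`. -/
theorem exists_eps_tendsto_zero_norm_conjugate {E : Type*} [NormedAddCommGroup E]
    [InnerProductSpace ℂ E] [CompleteSpace E]
    (h hinv : E →L[ℂ] E) (hh1 : h * hinv = 1) (hh2 : hinv * h = 1)
    (hs hsinv : ℕ → E →L[ℂ] E)
    (hs1 : ∀ n, hs n * hsinv n = 1) (hs2 : ∀ n, hsinv n * hs n = 1)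
    (hlim : Filter.Tendsto (fun n => ‖h * hsinv n - 1‖) Filter.atTop (nhds 0)) :
    ∃ ε : ℕ → ℝ, (∀ n, 0 ≤ ε n) ∧ Filter.Tendsto ε Filter.atTop (nhds 0) ∧
      ∀ (n : ℕ) (x : E →L[ℂ] E),
        |‖hs n * x * hs n‖ - ‖h * x * h‖| ≤ ε n * ‖h * x * h‖ := by
  rcases subsingleton_or_nontrivial E with hE | hE
  · refine ⟨fun _ => 0, fun _ => le_refl 0, tendsto_const_nhds, fun n x => ?_⟩
    have : Subsingleton (E →L[ℂ] E) := ⟨fun a b => by ext v; exact Subsingleton.elim _ _⟩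
    rw [Subsingleton.elim (hs n * x * hs n) (h * x * h)]
    simp
  · -- nontrivial case
    set a : ℕ → ℝ := fun n => ‖hs n * hinv‖ * ‖hinv * hs n‖ with ha
    set b : ℕ → ℝ := fun n => ‖h * hsinv n‖ * ‖hsinv n * h‖ with hb
    set M : ℕ → ℝ := fun n => max (a n) (b n) with hM
    -- hsinv → hinv
    have hsinv_sub : ∀ n, hsinv n - hinv = hinv * (h * hsinv n - 1) := by
      intro n; rw [mul_sub, mul_one, ← mul_assoc, hh2, one_mul]
    have hsinv_tendsto : Filter.Tendsto hsinv Filter.atTop (nhds hinv) := by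
      rw [tendsto_iff_norm_sub_tendsto_zero]
      refine squeeze_zero (fun n => norm_nonneg _) (fun n => ?_)
        (by simpa using hlim.const_mul ‖hinv‖)
      rw [hsinv_sub n]
      exact norm_mul_le _ _
    -- hs → h via continuity of Ring.inverse
    have hu : ∀ n, IsUnit (hsinv n) := fun n =>
      ⟨⟨hsinv n, hs n, hs2 n, hs1 n⟩, rfl⟩
    have hinv_unit : IsUnit hinv := ⟨⟨hinv, h, hh2, hh1⟩, rfl⟩
    have hs_eq : ∀ n, hs n = Ring.inverse (hsinv n) := fun n => by
      rw [show hsinv n = ((⟨hsinv n, hs n, hs2 n, hs1 n⟩ : (E →L[ℂ] E)ˣ) : E →L[ℂ] E) from rfl,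
        Ring.inverse_unit]
      rfl
    have h_eq : h = Ring.inverse hinv := by
      rw [show hinv = ((⟨hinv, h, hh2, hh1⟩ : (E →L[ℂ] E)ˣ) : E →L[ℂ] E) from rfl,
        Ring.inverse_unit]
      rfl
    have hs_tendsto : Filter.Tendsto hs Filter.atTop (nhds h) := by
      have := (NormedRing.inverse_continuousAt
        (⟨hinv, h, hh2, hh1⟩ : (E →L[ℂ] E)ˣ)).tendsto.comp hsinv_tendsto
      have heq : (Ring.inverse ∘ hsinv : ℕ → E →L[ℂ] E) = hs :=
        funext fun n => (hs_eq n).symm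
      rw [heq, ← h_eq] at this
      exact this
    -- limits of the norm products
    have norm_one' : ‖(1 : E →L[ℂ] E)‖ = 1 := norm_one
    have ha_lim : Filter.Tendsto a Filter.atTop (nhds 1) := by
      have h1 : Filter.Tendsto (fun n => ‖hs n * hinv‖) Filter.atTop (nhds 1) := by
        have := ((hs_tendsto.mul tendsto_const_nhds).norm :
          Filter.Tendsto (fun n => ‖hs n * hinv‖) Filter.atTop (nhds ‖h * hinv‖))
        rwa [hh1, norm_one'] at this
      have h2 : Filter.Tendsto (fun n => ‖hinv * hs n‖) Filter.atTop (nhds 1) := by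
        have := ((tendsto_const_nhds.mul hs_tendsto).norm :
          Filter.Tendsto (fun n => ‖hinv * hs n‖) Filter.atTop (nhds ‖hinv * h‖))
        rwa [hh2, norm_one'] at this
      simpa using h1.mul h2
    have hb_lim : Filter.Tendsto b Filter.atTop (nhds 1) := by
      have h1 : Filter.Tendsto (fun n => ‖h * hsinv n‖) Filter.atTop (nhds 1) := by
        have := ((tendsto_const_nhds.mul hsinv_tendsto).norm :
          Filter.Tendsto (fun n => ‖h * hsinv n‖) Filter.atTop (nhds ‖h * hinv‖))
        rwa [hh1, norm_one'] at this
      have h2 : Filter.Tendsto (fun n => ‖hsinv n * h‖) Filter.atTop (nhds 1) := by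
        have := ((hsinv_tendsto.mul tendsto_const_nhds).norm :
          Filter.Tendsto (fun n => ‖hsinv n * h‖) Filter.atTop (nhds ‖hinv * h‖))
        rwa [hh2, norm_one'] at this
      simpa using h1.mul h2
    -- 1 ≤ M n
    have hab : ∀ n, (1 : ℝ) ≤ a n * b n := by
      intro n
      have k1 : (1 : ℝ) ≤ ‖hs n * hinv‖ * ‖h * hsinv n‖ := by
        have : (1 : ℝ) = ‖(hs n * hinv) * (h * hsinv n)‖ := by
          rw [mul_assoc, ← mul_assoc hinv, hh2, one_mul, hs1, norm_one']
        rw [this]; exact norm_mul_le _ _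
      have k2 : (1 : ℝ) ≤ ‖hinv * hs n‖ * ‖hsinv n * h‖ := by
        have : (1 : ℝ) = ‖(hinv * hs n) * (hsinv n * h)‖ := by
          rw [mul_assoc, ← mul_assoc (hs n), hs1, one_mul, hh2, norm_one']
        rw [this]; exact norm_mul_le _ _
      calc (1 : ℝ) = 1 * 1 := by ring
        _ ≤ (‖hs n * hinv‖ * ‖h * hsinv n‖) * (‖hinv * hs n‖ * ‖hsinv n * h‖) :=
            mul_le_mul k1 k2 zero_le_one (le_trans zero_le_one k1)
        _ = a n * b n := by simp only [ha, hb]; ring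
    have hM1 : ∀ n, (1 : ℝ) ≤ M n := by
      intro n
      by_contra hc
      push_neg at hc
      have h1 : a n < 1 := lt_of_le_of_lt (le_max_left _ _) hc
      have h2 : b n < 1 := lt_of_le_of_lt (le_max_right _ _) hc
      have h0a : 0 ≤ a n := mul_nonneg (norm_nonneg _) (norm_nonneg _)
      nlinarith [hab n]
    refine ⟨fun n => M n - 1, fun n => sub_nonneg.2 (hM1 n), ?_, ?_⟩
    · have : Filter.Tendsto M Filter.atTop (nhds 1) := by
        have := ha_lim.max hb_lim
        simpa using this
      simpa using this.sub_const 1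
    · intro n x
      set A := ‖hs n * x * hs n‖ with hA
      set B := ‖h * x * h‖ with hB
      have hA0 : 0 ≤ A := norm_nonneg _
      have hB0 : 0 ≤ B := norm_nonneg _
      have idA : hs n * x * hs n = (hs n * hinv) * ((h * x * h) * (hinv * hs n)) := by
        simp only [mul_assoc]
        rw [show h * (hinv * hs n) = hs n by rw [← mul_assoc, hh1, one_mul],
          show hinv * (h * (x * hs n)) = x * hs n by rw [← mul_assoc, hh2, one_mul]]
      have idB : h * x * h = (h * hsinv n) * ((hs n * x * hs n) * (hsinv n * h)) := by
        simp only [mul_assoc]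
        rw [show hs n * (hsinv n * h) = h by rw [← mul_assoc, hs1, one_mul],
          show hsinv n * (hs n * (x * h)) = x * h by rw [← mul_assoc, hs2, one_mul]]
      have hAB : A ≤ a n * B := by
        rw [hA, idA]
        calc ‖(hs n * hinv) * ((h * x * h) * (hinv * hs n))‖
            ≤ ‖hs n * hinv‖ * ‖(h * x * h) * (hinv * hs n)‖ := norm_mul_le _ _
          _ ≤ ‖hs n * hinv‖ * (‖h * x * h‖ * ‖hinv * hs n‖) :=
              mul_le_mul_of_nonneg_left (norm_mul_le _ _) (norm_nonneg _)
          _ = a n * B := by rw [ha, hB]; ring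
      have hBA : B ≤ b n * A := by
        rw [hB, idB]
        calc ‖(h * hsinv n) * ((hs n * x * hs n) * (hsinv n * h))‖
            ≤ ‖h * hsinv n‖ * ‖(hs n * x * hs n) * (hsinv n * h)‖ := norm_mul_le _ _
          _ ≤ ‖h * hsinv n‖ * (‖hs n * x * hs n‖ * ‖hsinv n * h‖) :=
              mul_le_mul_of_nonneg_left (norm_mul_le _ _) (norm_nonneg _)
          _ = b n * A := by rw [hb, hA]; ring
      have haM : a n ≤ M n := le_max_left _ _
      have hbM : b n ≤ M n := le_max_right _ _
      have hM1' := hM1 n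
      rw [abs_sub_le_iff]
      constructor
      · -- A - B ≤ (M-1) B
        show A - B ≤ (M n - 1) * B
        have : a n * B ≤ M n * B := mul_le_mul_of_nonneg_right haM hB0
        nlinarith
      · -- B - A ≤ (M-1) B
        show B - A ≤ (M n - 1) * B
        have hBMA : B ≤ M n * A := le_trans hBA (mul_le_mul_of_nonneg_right hbM hA0)
        nlinarith [mul_nonneg hB0 (sq_nonneg (M n - 1)), mul_nonneg (sub_nonneg.2 hM1') hB0,
          mul_le_mul_of_nonneg_left hBMA (le_trans zero_le_one hM1')]
end

section
/- Let E be a complex Hilbert space, let n ≥ 1 and m ≥ 1 be integers, let γ₁, …, γₙ ∈ Mₘ(ℂ) be self-adjoint unitary matrices that pairwise anticommute (γⱼγₖ = −γₖγⱼ for j ≠ k), and let A₁, …, Aₙ be bounded linear operators on E. Let X = Σⱼ Aⱼ ⊗ γⱼ, the block operator on Eᵐ whose (i, l) block is Σⱼ (γⱼ)_{il} Aⱼ. Then for every j ∈ {1, …, n} one has ‖Aⱼ‖ ≤ ‖X‖, where the norms are the operator norms on B(E) and on B(Eᵐ) respectively. -/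
open scoped Matrix InnerProductSpace

/-!
Write `Γ = 1 ⊗ γⱼ`. Since `γⱼ` squares to `1` and anticommutes with the other `γₖ`, conjugating
`X = Σₖ Aₖ ⊗ γₖ` by the unitary `Γ` flips the sign of every term except `Aⱼ ⊗ γⱼ`, so
`Aⱼ ⊗ γⱼ = (X + Γ X Γ) / 2` has norm at most `‖X‖`. Finally `Aⱼ ⊗ γⱼ` agrees with `Aⱼ ⊗ 1` up to
the unitary `1 ⊗ γⱼ`, and `Aⱼ ⊗ 1` maps `v` placed in one coordinate to `Aⱼ v` in that coordinate.
-/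

section BlockOp

variable {ι E : Type*} [Fintype ι] [NormedAddCommGroup E] [InnerProductSpace ℂ E]

/-- The block operator `A ⊗ γ` on `Eᴵ`. -/
noncomputable def blockOp (A : E →L[ℂ] E) (γ : Matrix ι ι ℂ) :
    PiLp 2 (fun _ : ι => E) →ₗ[ℂ] PiLp 2 (fun _ : ι => E) where
  toFun ξ := WithLp.toLp 2 fun i => ∑ l, γ i l • A (ξ l)
  map_add' ξ η := by ext i; simp [Finset.sum_add_distrib]
  map_smul' c ξ := by ext i; simp [Finset.smul_sum, smul_comm c]

@[simp]
lemma blockOp_apply (A : E →L[ℂ] E) (γ : Matrix ι ι ℂ) (ξ : PiLp 2 (fun _ : ι => E)) (i : ι) :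
    blockOp A γ ξ i = ∑ l, γ i l • A (ξ l) :=
  rfl

lemma blockOp_comp (A B : E →L[ℂ] E) (γ δ : Matrix ι ι ℂ) :
    blockOp A γ ∘ₗ blockOp B δ = blockOp (A * B) (γ * δ) := by
  ext ξ i
  simp only [LinearMap.comp_apply, blockOp_apply, map_sum, map_smul, Finset.smul_sum, smul_smul,
    Matrix.mul_apply, Finset.sum_smul, mul_apply_eq_comp]
  exact Finset.sum_comm

lemma blockOp_add (A : E →L[ℂ] E) (γ δ : Matrix ι ι ℂ) :
    blockOp A (γ + δ) = blockOp A γ + blockOp A δ := by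
  ext ξ i
  simp [add_smul, Finset.sum_add_distrib]

lemma blockOp_smul (A : E →L[ℂ] E) (c : ℂ) (γ : Matrix ι ι ℂ) :
    blockOp A (c • γ) = c • blockOp A γ := by
  ext ξ i
  simp [Finset.smul_sum, smul_smul]

lemma blockOp_zero (A : E →L[ℂ] E) : blockOp A (0 : Matrix ι ι ℂ) = 0 := by
  ext ξ i
  simp

lemma inner_blockOp_left {A B : E →L[ℂ] E} (hAB : ∀ x y, ⟪A x, y⟫_ℂ = ⟪x, B y⟫_ℂ)
    (γ : Matrix ι ι ℂ) (ξ η : PiLp 2 (fun _ : ι => E)) :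
    ⟪blockOp A γ ξ, η⟫_ℂ = ⟪ξ, blockOp B γᴴ η⟫_ℂ := by
  simp only [PiLp.inner_apply, blockOp_apply, sum_inner, inner_sum, inner_smul_left,
    inner_smul_right, hAB, Matrix.conjTranspose_apply]
  exact Finset.sum_comm

variable [DecidableEq ι]

lemma blockOp_one_one : blockOp (1 : E →L[ℂ] E) (1 : Matrix ι ι ℂ) = LinearMap.id := by
  ext ξ i
  simp [Matrix.one_apply]

lemma blockOp_one_single (A : E →L[ℂ] E) (i : ι) (v : E) :
    blockOp A 1 (PiLp.single 2 i v) = PiLp.single 2 i (A v) := by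
  ext l
  simp [Matrix.one_apply, apply_ite A]

lemma norm_blockOp_one_of_mem_unitary {γ : Matrix ι ι ℂ} (hγ : γ ∈ unitary (Matrix ι ι ℂ))
    (ξ : PiLp 2 (fun _ : ι => E)) : ‖blockOp 1 γ ξ‖ = ‖ξ‖ := by
  refine ((blockOp 1 γ).isometryOfInner fun ξ η => ?_).norm_map ξ
  rw [inner_blockOp_left (A := 1) (B := 1) (fun _ _ => rfl), ← LinearMap.comp_apply, blockOp_comp,
    ← Matrix.star_eq_conjTranspose, Unitary.star_mul_self_of_mem hγ, one_mul, blockOp_one_one,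
    LinearMap.id_apply]

lemma opNorm_le_of_norm_blockOp_le [Nonempty ι] {A : E →L[ℂ] E} {γ : Matrix ι ι ℂ}
    (hγ : γ ∈ unitary (Matrix ι ι ℂ)) {C : ℝ} (hC : 0 ≤ C)
    (h : ∀ ξ, ‖blockOp A γ ξ‖ ≤ C * ‖ξ‖) : ‖A‖ ≤ C := by
  refine A.opNorm_le_bound hC fun v => ?_
  obtain ⟨i⟩ := ‹Nonempty ι›
  have hsingle : blockOp A γ (blockOp 1 (star γ) (PiLp.single 2 i v)) = PiLp.single 2 i (A v) := by
    rw [← LinearMap.comp_apply, blockOp_comp, mul_one, Unitary.mul_star_self_of_mem hγ,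
      blockOp_one_single]
  calc ‖A v‖ = ‖blockOp A γ (blockOp 1 (star γ) (PiLp.single 2 i v))‖ := by
        rw [hsingle, PiLp.norm_single]
    _ ≤ C * ‖blockOp 1 (star γ) (PiLp.single 2 i v)‖ := h _
    _ = C * ‖v‖ := by
        rw [norm_blockOp_one_of_mem_unitary (Unitary.star_mem hγ), PiLp.norm_single]

end BlockOp

section Clifford

variable {ι κ E : Type*} [Fintype ι] [DecidableEq ι] [DecidableEq κ] {γ : κ → Matrix ι ι ℂ}

lemma clifford_conj (hunit : ∀ j, γ j * γ j = 1)
    (hanti : ∀ j k, j ≠ k → γ j * γ k = -(γ k * γ j)) (j k : κ) :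
    γ j * γ k * γ j = if k = j then γ j else -γ k := by
  split_ifs with hkj
  · rw [hkj, hunit, one_mul]
  · rw [hanti j k (Ne.symm hkj), neg_mul, mul_assoc, hunit, mul_one]

variable [Fintype κ] [NormedAddCommGroup E] [InnerProductSpace ℂ E]

lemma sum_blockOp_add_conj (hunit : ∀ j, γ j * γ j = 1)
    (hanti : ∀ j k, j ≠ k → γ j * γ k = -(γ k * γ j)) (A : κ → E →L[ℂ] E) (j : κ) :
    ∑ k, (blockOp (A k) (γ k) + blockOp 1 (γ j) ∘ₗ blockOp (A k) (γ k) ∘ₗ blockOp 1 (γ j)) =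
      (2 : ℂ) • blockOp (A j) (γ j) := by
  simp_rw [blockOp_comp, one_mul, mul_one, ← mul_assoc, clifford_conj hunit hanti, ← blockOp_add]
  rw [Finset.sum_eq_single j (fun k _ hkj => by rw [if_neg hkj, add_neg_cancel, blockOp_zero])
    (by simp), if_pos rfl, ← two_smul ℂ, blockOp_smul]

lemma norm_blockOp_le_of_clifford (hunit : ∀ j, γ j * γ j = 1) (hanti : ∀ j k, j ≠ k → γ j * γ k = -(γ k * γ j))
    (A : κ → E →L[ℂ] E) (X : PiLp 2 (fun _ : ι => E) →L[ℂ] PiLp 2 (fun _ : ι => E))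
    (hX : ∀ ξ, X ξ = ∑ k, blockOp (A k) (γ k) ξ) (j : κ) (hγ : γ j ∈ unitary (Matrix ι ι ℂ))
    (ξ : PiLp 2 (fun _ : ι => E)) :
    ‖blockOp (A j) (γ j) ξ‖ ≤ ‖X‖ * ‖ξ‖ := by
  set Γ := blockOp (1 : E →L[ℂ] E) (γ j)
  have hΓ : ∀ η, ‖Γ η‖ = ‖η‖ := fun η => norm_blockOp_one_of_mem_unitary hγ η
  have hsplit : (2 : ℂ) • blockOp (A j) (γ j) ξ = X ξ + Γ (X (Γ ξ)) := by
    rw [hX, hX, map_sum, ← Finset.sum_add_distrib, ← LinearMap.smul_apply,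
      ← sum_blockOp_add_conj hunit hanti A j]
    simp [Γ, LinearMap.sum_apply]
  have htwice : 2 * ‖blockOp (A j) (γ j) ξ‖ ≤ 2 * (‖X‖ * ‖ξ‖) :=
    calc 2 * ‖blockOp (A j) (γ j) ξ‖ = ‖X ξ + Γ (X (Γ ξ))‖ := by rw [← hsplit, norm_smul]; simp
      _ ≤ ‖X ξ‖ + ‖X (Γ ξ)‖ := by rw [← hΓ (X (Γ ξ))]; exact norm_add_le _ _
      _ ≤ ‖X‖ * ‖ξ‖ + ‖X‖ * ‖Γ ξ‖ := add_le_add (X.le_opNorm _) (X.le_opNorm _)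
      _ = 2 * (‖X‖ * ‖ξ‖) := by rw [hΓ]; ring
  linarith

end Clifford

theorem norm_coeff_le_norm_clifford_sum_general {E : Type*} [NormedAddCommGroup E]
    [InnerProductSpace ℂ E]
    (n m : ℕ) (hm : 1 ≤ m)
    (γ : Fin n → Matrix (Fin m) (Fin m) ℂ)
    (hsa : ∀ j, (γ j)ᴴ = γ j)
    (hunit : ∀ j, γ j * γ j = 1)
    (hanti : ∀ j k, j ≠ k → γ j * γ k = -(γ k * γ j))
    (A : Fin n → E →L[ℂ] E)
    (X : PiLp 2 (fun _ : Fin m => E) →L[ℂ] PiLp 2 (fun _ : Fin m => E))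
    (hX : ∀ (ξ : PiLp 2 (fun _ : Fin m => E)) (i : Fin m),
      X ξ i = ∑ j, ∑ l, γ j i l • A j (ξ l)) :
    ∀ j, ‖A j‖ ≤ ‖X‖ := by
  intro j
  have hγ : γ j ∈ unitary (Matrix (Fin m) (Fin m) ℂ) :=
    Unitary.mem_iff.mpr (by simp [Matrix.star_eq_conjTranspose, hsa, hunit])
  have : Nonempty (Fin m) := ⟨⟨0, hm⟩⟩
  refine opNorm_le_of_norm_blockOp_le hγ (norm_nonneg X) ?_
  exact norm_blockOp_le_of_clifford hunit hanti A X
    (fun ξ => PiLp.ext fun i => by simp [hX, WithLp.ofLp_sum]) j hγ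

/-- If `γ₁, …, γₙ` are self-adjoint unitary pairwise anticommuting matrices in `Mₘ(ℂ)`,
`A₁, …, Aₙ` are bounded operators on a complex Hilbert space `E`, and
`X = Σⱼ Aⱼ ⊗ γⱼ` is the associated block operator on `Eᵐ`, then `‖Aⱼ‖ ≤ ‖X‖` for all `j`. -/
theorem norm_coeff_le_norm_clifford_sum {E : Type*} [NormedAddCommGroup E]
    [InnerProductSpace ℂ E] [CompleteSpace E]
    (n m : ℕ) (hn : 1 ≤ n) (hm : 1 ≤ m)
    (γ : Fin n → Matrix (Fin m) (Fin m) ℂ)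
    (hsa : ∀ j, (γ j)ᴴ = γ j)
    (hunit : ∀ j, γ j * γ j = 1)
    (hanti : ∀ j k, j ≠ k → γ j * γ k = -(γ k * γ j))
    (A : Fin n → E →L[ℂ] E)
    (X : PiLp 2 (fun _ : Fin m => E) →L[ℂ] PiLp 2 (fun _ : Fin m => E))
    (hX : ∀ (ξ : PiLp 2 (fun _ : Fin m => E)) (i : Fin m),
      X ξ i = ∑ j, ∑ l, γ j i l • A j (ξ l)) :
    ∀ j, ‖A j‖ ≤ ‖X‖ :=
  norm_coeff_le_norm_clifford_sum_general n m hm γ hsa hunit hanti A X hX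
end

section
/- Let E be a complex Hilbert space, let n ≥ 1 and m ≥ 1 be integers, and let γ₁, …, γₙ ∈ Mₘ(ℂ) be self-adjoint unitary matrices that pairwise anticommute (γⱼγₖ = −γₖγⱼ for j ≠ k). Let H = (h_{kj}) and H' = (h'_{kj}) be n×n arrays of bounded linear operators on E whose associated block operators on Eⁿ, defined by (Hx)ⱼ = Σₖ h_{kj} xₖ, are invertible as bounded operators on Eⁿ. For bounded linear operators T₁, …, Tₙ on E define L_H(T) = ‖Σⱼ (Σₖ h_{kj} Tₖ) ⊗ γⱼ‖, the operator norm on Eᵐ of the block operator whose (i, l) block is Σⱼ Σₖ (γⱼ)_{il} h_{kj} Tₖ, and similarly L_{H'}(T). Then |L_H(T) − L_{H'}(T)| ≤ n · ‖1_{Eⁿ} − H' H⁻¹‖ · L_H(T), where ‖1_{Eⁿ} − H' H⁻¹‖ is the operator norm on Eⁿ. -/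
/-!
Write `S j = ∑ k, h k j * T k`, so that `XH = ∑ j, S j ⊗ γ j`. The Clifford relations make the
`γ j` orthogonal for the Hilbert–Schmidt inner product, with `tr (γ jᴴ γ j) = m`; evaluating `XH`
on vectors concentrated in a single slot then shows that the column `x ↦ (S j x)ⱼ`, which is
`H` applied to `x ↦ (T k x)ₖ`, has norm at most `‖XH‖`. Since `H - H' = (1 - H' H⁻¹) H`, every
`S j - S' j` has norm at most `‖1 - H' H⁻¹‖ ‖XH‖`. Finally `XH - XH' = ∑ j, (S j - S' j) ⊗ γ j`,
and `‖A ⊗ γ‖ ≤ ‖A‖` for unitary `γ`.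
-/

open Finset
open scoped Matrix ComplexConjugate InnerProductSpace

section

variable {𝕜 E : Type*} [RCLike 𝕜] [NormedAddCommGroup E] [InnerProductSpace 𝕜 E]

theorem sum_norm_sq_sum_smul_of_orthogonal {I K : Type*} [Fintype I] [Fintype K] [DecidableEq K]
    (c : I → K → 𝕜) (r : ℝ)
    (hc : ∀ k k', ∑ i, conj (c i k) * c i k' = if k = k' then (r : 𝕜) else 0) (v : K → E) :
    ∑ i, ‖∑ k, c i k • v k‖ ^ 2 = r * ∑ k, ‖v k‖ ^ 2 := by
  suffices ((∑ i, ‖∑ k, c i k • v k‖ ^ 2 : ℝ) : 𝕜) = ((r * ∑ k, ‖v k‖ ^ 2 : ℝ) : 𝕜) from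
    RCLike.ofReal_injective this
  push_cast
  simp_rw [← inner_self_eq_norm_sq_to_K, sum_inner, inner_sum, inner_smul_left, inner_smul_right]
  calc ∑ i, ∑ k, ∑ k', conj (c i k) * (c i k' * ⟪v k, v k'⟫_𝕜)
      = ∑ k, ∑ k', (∑ i, conj (c i k) * c i k') * ⟪v k, v k'⟫_𝕜 := by
        rw [sum_comm]; refine sum_congr rfl fun k _ => ?_
        rw [sum_comm]; simp_rw [sum_mul, mul_assoc]
    _ = (r : 𝕜) * ∑ k, ⟪v k, v k⟫_𝕜 := by
        simp_rw [hc, ite_mul, zero_mul, sum_ite_eq, mem_univ, if_true, mul_sum]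

theorem Matrix.trace_mul_eq_zero_of_mul_eq_neg {n R : Type*} [Fintype n] [CommRing R]
    [NoZeroDivisors R] [CharZero R] {A B : Matrix n n R} (h : A * B = -(B * A)) :
    (A * B).trace = 0 := by
  have : (A * B).trace = -(A * B).trace := by
    conv_lhs => rw [h]
    rw [Matrix.trace_neg, Matrix.trace_mul_comm]
  exact CharZero.eq_neg_self_iff.mp this

theorem trace_conjTranspose_mul_of_clifford {ι J : Type*} [Fintype ι] [DecidableEq ι]
    [DecidableEq J] {γ : J → Matrix ι ι 𝕜}
    (hsa : ∀ j, (γ j)ᴴ = γ j) (hunit : ∀ j, γ j * γ j = 1)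
    (hanti : ∀ j k, j ≠ k → γ j * γ k = -(γ k * γ j)) (j k : J) :
    ((γ j)ᴴ * γ k).trace = if j = k then (Fintype.card ι : 𝕜) else 0 := by
  rw [hsa]
  split_ifs with hjk
  · rw [hjk, hunit, Matrix.trace_one]
  · exact Matrix.trace_mul_eq_zero_of_mul_eq_neg (hanti j k hjk)

namespace ContinuousLinearMap

variable {ι J : Type*} [Fintype ι]

/-- `A ⊗ γ` acting on `Eᵐ`. -/
def tensorMatrix (A : E →L[𝕜] E) (γ : Matrix ι ι 𝕜) :
    PiLp 2 (fun _ : ι => E) →L[𝕜] PiLp 2 (fun _ : ι => E) :=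
  (PiLp.continuousLinearEquiv 2 𝕜 (fun _ : ι => E)).symm.toContinuousLinearMap ∘L
    pi fun i => ∑ l, γ i l • A ∘L PiLp.proj 2 (fun _ : ι => E) l

@[simp]
theorem tensorMatrix_apply (A : E →L[𝕜] E) (γ : Matrix ι ι 𝕜) (ξ : PiLp 2 (fun _ : ι => E))
    (i : ι) : tensorMatrix A γ ξ i = ∑ l, γ i l • A (ξ l) := by
  simp [tensorMatrix]

theorem tensorMatrix_sub (A B : E →L[𝕜] E) (γ : Matrix ι ι 𝕜) :
    tensorMatrix (A - B) γ = tensorMatrix A γ - tensorMatrix B γ := by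
  ext ξ i
  simp [smul_sub]

theorem norm_tensorMatrix_le [DecidableEq ι] (A : E →L[𝕜] E) {γ : Matrix ι ι 𝕜}
    (hγ : γᴴ * γ = 1) :
    ‖tensorMatrix A γ‖ ≤ ‖A‖ := by
  refine opNorm_le_bound _ (norm_nonneg A) fun ξ => ?_
  refine le_of_sq_le_sq ?_ (by positivity)
  have hiso : ∑ i, ‖∑ l, γ i l • ξ l‖ ^ 2 = ‖ξ‖ ^ 2 := by
    rw [PiLp.norm_sq_eq_of_L2, sum_norm_sq_sum_smul_of_orthogonal γ 1 _ _, one_mul]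
    intro k k'
    simpa [Matrix.mul_apply, Matrix.one_apply] using congr_fun₂ hγ k k'
  calc ‖tensorMatrix A γ ξ‖ ^ 2 = ∑ i, ‖A (∑ l, γ i l • ξ l)‖ ^ 2 := by
        simp [PiLp.norm_sq_eq_of_L2]
    _ ≤ ∑ i, ‖A‖ ^ 2 * ‖∑ l, γ i l • ξ l‖ ^ 2 := by
        gcongr with i
        rw [← mul_pow]
        gcongr
        exact A.le_opNorm _
    _ = (‖A‖ * ‖ξ‖) ^ 2 := by rw [← mul_sum, hiso, mul_pow]

def column (T : J → E →L[𝕜] E) : E →L[𝕜] PiLp 2 (fun _ : J => E) :=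
  (PiLp.continuousLinearEquiv 2 𝕜 (fun _ : J => E)).symm.toContinuousLinearMap ∘L pi T

@[simp]
theorem column_apply (T : J → E →L[𝕜] E) (x : E) (j : J) : column T x j = T j x := rfl

variable [Fintype J]

theorem norm_sq_column_apply (T : J → E →L[𝕜] E) (x : E) :
    ‖column T x‖ ^ 2 = ∑ j, ‖T j x‖ ^ 2 := by
  simp only [PiLp.norm_sq_eq_of_L2, column_apply]

theorem column_sub (S T : J → E →L[𝕜] E) : column (S - T) = column S - column T := by
  ext x j
  simp

theorem norm_le_norm_column (T : J → E →L[𝕜] E) (j : J) : ‖T j‖ ≤ ‖column T‖ :=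
  opNorm_le_bound _ (norm_nonneg _) fun x =>
    (PiLp.norm_apply_le (column T x) j).trans ((column T).le_opNorm x)

theorem comp_column_of_apply {h : J → J → E →L[𝕜] E}
    {H : PiLp 2 (fun _ : J => E) →L[𝕜] PiLp 2 (fun _ : J => E)}
    (hH : ∀ x j, H x j = ∑ k, h k j (x k)) (T : J → E →L[𝕜] E) :
    H ∘L column T = column fun j => ∑ k, h k j * T k := by
  ext x j
  simp [hH]

theorem norm_column_le_norm_sum_tensorMatrix [DecidableEq ι] [DecidableEq J] [Nonempty ι]
    {γ : J → Matrix ι ι 𝕜}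
    (htr : ∀ j k, ((γ j)ᴴ * γ k).trace = if j = k then (Fintype.card ι : 𝕜) else 0)
    (S : J → E →L[𝕜] E) :
    ‖column S‖ ≤ ‖∑ j, tensorMatrix (S j) (γ j)‖ := by
  set X := ∑ j, tensorMatrix (S j) (γ j)
  refine opNorm_le_bound _ (norm_nonneg X) fun x => le_of_sq_le_sq ?_ (by positivity)
  let ζ : ι → PiLp 2 (fun _ : ι => E) := fun i₀ => PiLp.single 2 i₀ x
  have hXζ : ∀ i₀ i, X (ζ i₀) i = ∑ j, γ j i i₀ • S j x := by
    intro i₀ i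
    simp [X, ζ, Finset.sum_apply, PiLp.single_apply, apply_ite]
  have hsum : ∑ i₀, ‖X (ζ i₀)‖ ^ 2 = Fintype.card ι * ‖column S x‖ ^ 2 := by
    rw [norm_sq_column_apply,
      ← sum_norm_sq_sum_smul_of_orthogonal (fun p : ι × ι => fun j => γ j p.2 p.1)]
    · simp [PiLp.norm_sq_eq_of_L2, hXζ, Fintype.sum_prod_type]
    · intro j k
      rw [RCLike.ofReal_natCast, ← htr, Fintype.sum_prod_type]
      simp [Matrix.trace, Matrix.mul_apply]
  have hle : Fintype.card ι * ‖column S x‖ ^ 2 ≤ Fintype.card ι * (‖X‖ * ‖x‖) ^ 2 := by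
    rw [← hsum]
    calc ∑ i₀, ‖X (ζ i₀)‖ ^ 2 ≤ ∑ i₀ : ι, (‖X‖ * ‖x‖) ^ 2 := by
          gcongr with i₀
          simpa [ζ] using X.le_opNorm (ζ i₀)
      _ = Fintype.card ι * (‖X‖ * ‖x‖) ^ 2 := by simp
  exact le_of_mul_le_mul_left hle (by positivity)

theorem norm_sum_tensorMatrix_le [DecidableEq ι] {γ : J → Matrix ι ι 𝕜}
    (hγ : ∀ j, (γ j)ᴴ * γ j = 1) (D : J → E →L[𝕜] E) :
    ‖∑ j, tensorMatrix (D j) (γ j)‖ ≤ ∑ j, ‖D j‖ :=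
  (norm_sum_le _ _).trans (sum_le_sum fun j _ => norm_tensorMatrix_le (D j) (hγ j))

theorem eq_sum_tensorMatrix_of_apply {γ : J → Matrix ι ι 𝕜} {S : J → E →L[𝕜] E}
    {X : PiLp 2 (fun _ : ι => E) →L[𝕜] PiLp 2 (fun _ : ι => E)}
    (hX : ∀ ξ i, X ξ i = ∑ j, ∑ l, γ j i l • S j (ξ l)) :
    X = ∑ j, tensorMatrix (S j) (γ j) := by
  ext ξ i
  simp [hX, Finset.sum_apply]

end ContinuousLinearMap

end

open ContinuousLinearMap

theorem abs_seminorm_sub_le_curved_general {E : Type*} [NormedAddCommGroup E]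
    [InnerProductSpace ℂ E]
    (n m : ℕ) (hm : 1 ≤ m)
    (γ : Fin n → Matrix (Fin m) (Fin m) ℂ)
    (hsa : ∀ j, (γ j)ᴴ = γ j)
    (hunit : ∀ j, γ j * γ j = 1)
    (hanti : ∀ j k, j ≠ k → γ j * γ k = -(γ k * γ j))
    (h h' : Fin n → Fin n → E →L[ℂ] E)
    (H H' Hinv : PiLp 2 (fun _ : Fin n => E) →L[ℂ] PiLp 2 (fun _ : Fin n => E))
    (hH : ∀ (x : PiLp 2 (fun _ : Fin n => E)) (j : Fin n), H x j = ∑ k, h k j (x k))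
    (hH' : ∀ (x : PiLp 2 (fun _ : Fin n => E)) (j : Fin n), H' x j = ∑ k, h' k j (x k))
    (hHinv2 : Hinv * H = 1)
    (T : Fin n → E →L[ℂ] E)
    (XH XH' : PiLp 2 (fun _ : Fin m => E) →L[ℂ] PiLp 2 (fun _ : Fin m => E))
    (hXH : ∀ (ξ : PiLp 2 (fun _ : Fin m => E)) (i : Fin m),
      XH ξ i = ∑ j, ∑ l, γ j i l • (∑ k, h k j * T k) (ξ l))
    (hXH' : ∀ (ξ : PiLp 2 (fun _ : Fin m => E)) (i : Fin m),
      XH' ξ i = ∑ j, ∑ l, γ j i l • (∑ k, h' k j * T k) (ξ l)) :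
    |‖XH‖ - ‖XH'‖| ≤ (n : ℝ) * ‖1 - H' * Hinv‖ * ‖XH‖ := by
  have : Nonempty (Fin m) := ⟨⟨0, hm⟩⟩
  set S : Fin n → E →L[ℂ] E := fun j => ∑ k, h k j * T k
  set S' : Fin n → E →L[ℂ] E := fun j => ∑ k, h' k j * T k
  have hX : XH = ∑ j, tensorMatrix (S j) (γ j) := eq_sum_tensorMatrix_of_apply hXH
  have hX' : XH' = ∑ j, tensorMatrix (S' j) (γ j) := eq_sum_tensorMatrix_of_apply hXH'
  have hcol : ‖column S‖ ≤ ‖XH‖ := hX ▸ norm_column_le_norm_sum_tensorMatrix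
    (trace_conjTranspose_mul_of_clifford hsa hunit hanti) S
  have hfactor : (1 - H' * Hinv) * H = H - H' := by
    rw [sub_mul, one_mul, mul_assoc, hHinv2, mul_one]
  have hdiff : ∀ j, ‖S j - S' j‖ ≤ ‖1 - H' * Hinv‖ * ‖XH‖ := fun j => calc
      ‖S j - S' j‖ ≤ ‖column (S - S')‖ := norm_le_norm_column (S - S') j
      _ = ‖(1 - H' * Hinv) ∘L column S‖ := by
        rw [column_sub, ← comp_column_of_apply hH, ← comp_column_of_apply hH', ← sub_comp,
          ← hfactor, ContinuousLinearMap.mul_def, comp_assoc]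
      _ ≤ ‖1 - H' * Hinv‖ * ‖XH‖ := (opNorm_comp_le _ _).trans (by gcongr)
  calc |‖XH‖ - ‖XH'‖| ≤ ‖XH - XH'‖ := abs_norm_sub_norm_le XH XH'
    _ = ‖∑ j, tensorMatrix (S j - S' j) (γ j)‖ := by
        simp_rw [hX, hX', tensorMatrix_sub, sum_sub_distrib]
    _ ≤ ∑ j, ‖S j - S' j‖ := norm_sum_tensorMatrix_le (fun j => by rw [hsa, hunit]) _
    _ ≤ ∑ _j : Fin n, ‖1 - H' * Hinv‖ * ‖XH‖ := sum_le_sum fun j _ => hdiff j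
    _ = n * ‖1 - H' * Hinv‖ * ‖XH‖ := by simp [mul_assoc]

/-- Key estimate comparing the Lipschitz seminorms of two curved Dirac operators:
`|L_H(T) − L_{H'}(T)| ≤ n ‖1 − H' H⁻¹‖ L_H(T)`. -/
theorem abs_seminorm_sub_le_curved {E : Type*} [NormedAddCommGroup E]
    [InnerProductSpace ℂ E] [CompleteSpace E]
    (n m : ℕ) (hn : 1 ≤ n) (hm : 1 ≤ m)
    (γ : Fin n → Matrix (Fin m) (Fin m) ℂ)
    (hsa : ∀ j, (γ j)ᴴ = γ j)
    (hunit : ∀ j, γ j * γ j = 1)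
    (hanti : ∀ j k, j ≠ k → γ j * γ k = -(γ k * γ j))
    (h h' : Fin n → Fin n → E →L[ℂ] E)
    (H H' Hinv : PiLp 2 (fun _ : Fin n => E) →L[ℂ] PiLp 2 (fun _ : Fin n => E))
    (hH : ∀ (x : PiLp 2 (fun _ : Fin n => E)) (j : Fin n), H x j = ∑ k, h k j (x k))
    (hH' : ∀ (x : PiLp 2 (fun _ : Fin n => E)) (j : Fin n), H' x j = ∑ k, h' k j (x k))
    (hHinv1 : H * Hinv = 1) (hHinv2 : Hinv * H = 1)
    (hH'unit : IsUnit H')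
    (T : Fin n → E →L[ℂ] E)
    (XH XH' : PiLp 2 (fun _ : Fin m => E) →L[ℂ] PiLp 2 (fun _ : Fin m => E))
    (hXH : ∀ (ξ : PiLp 2 (fun _ : Fin m => E)) (i : Fin m),
      XH ξ i = ∑ j, ∑ l, γ j i l • (∑ k, h k j * T k) (ξ l))
    (hXH' : ∀ (ξ : PiLp 2 (fun _ : Fin m => E)) (i : Fin m),
      XH' ξ i = ∑ j, ∑ l, γ j i l • (∑ k, h' k j * T k) (ξ l)) :
    |‖XH‖ - ‖XH'‖| ≤ (n : ℝ) * ‖1 - H' * Hinv‖ * ‖XH‖ :=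
  abs_seminorm_sub_le_curved_general n m hm γ hsa hunit hanti h h' H H' Hinv hH hH' hHinv2 T XH XH'
    hXH hXH'
end

section
/- Let E be a complex Hilbert space, let n ≥ 1 and m ≥ 1 be integers, and let γ₁, …, γₙ ∈ Mₘ(ℂ) be self-adjoint unitary matrices that pairwise anticommute (γⱼγₖ = −γₖγⱼ for j ≠ k). Let H = (h_{kj}) and H' = (h'_{kj}) be n×n arrays of bounded linear operators on E whose associated block operators on Eⁿ, defined by (Hx)ⱼ = Σₖ h_{kj} xₖ, are invertible as bounded operators on Eⁿ. For bounded linear operators T₁, …, Tₙ on E define L_H(T) = ‖Σⱼ (Σₖ h_{kj} Tₖ) ⊗ γⱼ‖, the operator norm on Eᵐ of the block operator whose (i, l) block is Σⱼ Σₖ (γⱼ)_{il} h_{kj} Tₖ, and similarly L_{H'}(T). Then L_{H'}(T) ≤ (1 + n · ‖1_{Eⁿ} − H' H⁻¹‖) · L_H(T), where ‖1_{Eⁿ} − H' H⁻¹‖ is the operator norm on Eⁿ. -/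
open scoped Matrix
open scoped InnerProductSpace

private lemma aux_isometry {E : Type*} [NormedAddCommGroup E] [InnerProductSpace ℂ E] {m : ℕ}
    (γ : Matrix (Fin m) (Fin m) ℂ) (hγ : γᴴ * γ = 1)
    (η w : PiLp 2 (fun _ : Fin m => E)) (hw : ∀ i, w i = ∑ l, γ i l • η l) :
    ‖w‖ = ‖η‖ := by
  have h1 : (⟪w, w⟫_ℂ) = ⟪η, η⟫_ℂ := by
    rw [PiLp.inner_apply, PiLp.inner_apply]
    have : ∀ i, ⟪w i, w i⟫_ℂ = ∑ l, ∑ l', (starRingEnd ℂ) (γ i l) * γ i l' * ⟪η l, η l'⟫_ℂ := by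
      intro i
      rw [hw, sum_inner]
      refine Finset.sum_congr rfl fun l _ => ?_
      rw [inner_smul_left, inner_sum, Finset.mul_sum]
      refine Finset.sum_congr rfl fun l' _ => ?_
      rw [inner_smul_right]; ring
    rw [Finset.sum_congr rfl fun i _ => this i, Finset.sum_comm]
    calc ∑ l, ∑ i, ∑ l', (starRingEnd ℂ) (γ i l) * γ i l' * ⟪η l, η l'⟫_ℂ
        = ∑ l, ∑ l', (∑ i, (starRingEnd ℂ) (γ i l) * γ i l') * ⟪η l, η l'⟫_ℂ := by
          refine Finset.sum_congr rfl fun l _ => ?_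
          rw [Finset.sum_comm]
          exact Finset.sum_congr rfl fun l' _ => (Finset.sum_mul _ _ _).symm
      _ = ∑ l, ∑ l', ((γᴴ * γ) l l') * ⟪η l, η l'⟫_ℂ := by
          refine Finset.sum_congr rfl fun l _ => Finset.sum_congr rfl fun l' _ => ?_
          rw [Matrix.mul_apply]
          simp [Matrix.conjTranspose_apply]
      _ = ∑ l, ⟪η l, η l⟫_ℂ := by
          rw [hγ]
          refine Finset.sum_congr rfl fun l _ => ?_
          simp [Matrix.one_apply, Finset.sum_ite_eq, ite_mul]
  rw [norm_eq_sqrt_re_inner (𝕜 := ℂ) w, norm_eq_sqrt_re_inner (𝕜 := ℂ) η, h1]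

private lemma piLp_sum_apply {ι κ E : Type*} [Fintype ι] [Fintype κ]
    [NormedAddCommGroup E] [InnerProductSpace ℂ E]
    (w : ι → PiLp 2 (fun _ : κ => E)) (i : κ) :
    (∑ j, w j) i = ∑ j, w j i := by
  have h := congrFun (map_sum (WithLp.linearEquiv 2 ℂ (∀ _ : κ, E)) w Finset.univ) i
  rw [Finset.sum_apply] at h
  exact h

private lemma clifford_step {E : Type*} [NormedAddCommGroup E] [InnerProductSpace ℂ E]
    {n m : ℕ} (γ : Fin n → Matrix (Fin m) (Fin m) ℂ)
    (hunit : ∀ j, γ j * γ j = 1)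
    (hanti : ∀ j k, j ≠ k → γ j * γ k = -(γ k * γ j))
    (S : Fin n → E →L[ℂ] E) (p : Fin n)
    (ξ X g Xg : PiLp 2 (fun _ : Fin m => E))
    (hX : ∀ i, X i = ∑ j, ∑ l, γ j i l • S j (ξ l))
    (hg : ∀ l, g l = ∑ l', γ p l l' • ξ l')
    (hXg : ∀ i, Xg i = ∑ j, ∑ l, γ j i l • S j (g l))
    (i : Fin m) :
    Xg i + ∑ l, γ p i l • X l = (2 : ℂ) • S p (ξ i) := by
  have e1 : Xg i = ∑ j, ∑ l', ((γ j * γ p) i l') • S j (ξ l') := by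
    rw [hXg i]
    refine Finset.sum_congr rfl fun j _ => ?_
    calc ∑ l, γ j i l • S j (g l)
        = ∑ l, ∑ l', (γ j i l * γ p l l') • S j (ξ l') := by
          refine Finset.sum_congr rfl fun l _ => ?_
          rw [hg, map_sum, Finset.smul_sum]
          exact Finset.sum_congr rfl fun l' _ => by rw [map_smul, smul_smul]
      _ = ∑ l', (∑ l, γ j i l * γ p l l') • S j (ξ l') := by
          rw [Finset.sum_comm]
          exact Finset.sum_congr rfl fun l' _ => (Finset.sum_smul).symm
      _ = ∑ l', ((γ j * γ p) i l') • S j (ξ l') := by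
          simp [Matrix.mul_apply]
  have e2 : ∑ l, γ p i l • X l = ∑ j, ∑ l', ((γ p * γ j) i l') • S j (ξ l') := by
    calc ∑ l, γ p i l • X l
        = ∑ l, ∑ j, ∑ l', (γ p i l * γ j l l') • S j (ξ l') := by
          refine Finset.sum_congr rfl fun l _ => ?_
          rw [hX, Finset.smul_sum]
          refine Finset.sum_congr rfl fun j _ => ?_
          rw [Finset.smul_sum]
          exact Finset.sum_congr rfl fun l' _ => (smul_smul _ _ _)
      _ = ∑ j, ∑ l', (∑ l, γ p i l * γ j l l') • S j (ξ l') := by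
          rw [Finset.sum_comm]
          refine Finset.sum_congr rfl fun j _ => ?_
          rw [Finset.sum_comm]
          exact Finset.sum_congr rfl fun l' _ => (Finset.sum_smul).symm
      _ = ∑ j, ∑ l', ((γ p * γ j) i l') • S j (ξ l') := by
          simp [Matrix.mul_apply]
  rw [e1, e2, ← Finset.sum_add_distrib]
  have e3 : ∀ j : Fin n, ((∑ l', ((γ j * γ p) i l') • S j (ξ l'))
        + ∑ l', ((γ p * γ j) i l') • S j (ξ l'))
      = if j = p then (2:ℂ) • S p (ξ i) else 0 := by
    intro j
    by_cases hj : j = p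
    · subst hj
      rw [if_pos rfl, hunit j]
      have : ∀ l', ((1 : Matrix (Fin m) (Fin m) ℂ) i l') • S j (ξ l')
          = if l' = i then S j (ξ l') else 0 := by
        intro l'
        by_cases hl : l' = i
        · subst hl; simp [Matrix.one_apply]
        · simp [Matrix.one_apply, Ne.symm hl, hl]
      rw [Finset.sum_congr rfl fun l' _ => this l', Finset.sum_ite_eq' Finset.univ i
        (fun l' => S j (ξ l'))]
      rw [two_smul ℂ]
      simp
    · rw [if_neg hj, hanti j p hj, ← Finset.sum_add_distrib]
      refine Finset.sum_eq_zero fun l' _ => ?_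
      simp [Matrix.neg_apply, neg_smul]
  rw [Finset.sum_congr rfl fun j _ => e3 j, Finset.sum_ite_eq' Finset.univ p
    (fun _ => (2:ℂ) • S p (ξ i))]
  simp

set_option maxHeartbeats 2000000 in
set_option synthInstance.maxHeartbeats 1000000 in

/-- Key estimate comparing the Lipschitz seminorms of two curved Dirac operators:
`L_{H'}(T) ≤ (1 + n ‖1 − H' H⁻¹‖) L_H(T)`. -/
theorem seminorm_le_curved {E : Type*} [NormedAddCommGroup E]
    [InnerProductSpace ℂ E] [CompleteSpace E]
    (n m : ℕ) (hn : 1 ≤ n) (hm : 1 ≤ m)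
    (γ : Fin n → Matrix (Fin m) (Fin m) ℂ)
    (hsa : ∀ j, (γ j)ᴴ = γ j)
    (hunit : ∀ j, γ j * γ j = 1)
    (hanti : ∀ j k, j ≠ k → γ j * γ k = -(γ k * γ j))
    (h h' : Fin n → Fin n → E →L[ℂ] E)
    (H H' Hinv : PiLp 2 (fun _ : Fin n => E) →L[ℂ] PiLp 2 (fun _ : Fin n => E))
    (hH : ∀ (x : PiLp 2 (fun _ : Fin n => E)) (j : Fin n), H x j = ∑ k, h k j (x k))
    (hH' : ∀ (x : PiLp 2 (fun _ : Fin n => E)) (j : Fin n), H' x j = ∑ k, h' k j (x k))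
    (hHinv1 : H * Hinv = 1) (hHinv2 : Hinv * H = 1)
    (hH'unit : IsUnit H')
    (T : Fin n → E →L[ℂ] E)
    (XH XH' : PiLp 2 (fun _ : Fin m => E) →L[ℂ] PiLp 2 (fun _ : Fin m => E))
    (hXH : ∀ (ξ : PiLp 2 (fun _ : Fin m => E)) (i : Fin m),
      XH ξ i = ∑ j, ∑ l, γ j i l • (∑ k, h k j * T k) (ξ l))
    (hXH' : ∀ (ξ : PiLp 2 (fun _ : Fin m => E)) (i : Fin m),
      XH' ξ i = ∑ j, ∑ l, γ j i l • (∑ k, h' k j * T k) (ξ l)) :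
    ‖XH'‖ ≤ (1 + (n : ℝ) * ‖1 - H' * Hinv‖) * ‖XH‖ := by
  classical
  obtain ⟨S, hS⟩ : ∃ S : Fin n → E →L[ℂ] E, S = fun j => ∑ k, h k j * T k := ⟨_, rfl⟩
  obtain ⟨S', hS'⟩ : ∃ S' : Fin n → E →L[ℂ] E, S' = fun j => ∑ k, h' k j * T k := ⟨_, rfl⟩
  have hSa : ∀ j x, S j x = ∑ k, h k j (T k x) := by
    intro j x; rw [hS]; simp [ContinuousLinearMap.sum_apply]
  have hS'a : ∀ j x, S' j x = ∑ k, h' k j (T k x) := by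
    intro j x; rw [hS']; simp [ContinuousLinearMap.sum_apply]
  have hXHS : ∀ (ξ : PiLp 2 (fun _ : Fin m => E)) (i : Fin m),
      XH ξ i = ∑ j, ∑ l, γ j i l • S j (ξ l) := by
    intro ξ i; rw [hXH ξ i, hS]
  have hXH'S : ∀ (ξ : PiLp 2 (fun _ : Fin m => E)) (i : Fin m),
      XH' ξ i = ∑ j, ∑ l, γ j i l • S' j (ξ l) := by
    intro ξ i; rw [hXH' ξ i, hS']
  set c := ‖XH‖ with hc
  set d := ‖1 - H' * Hinv‖ with hd
  have hc0 : 0 ≤ c := hc ▸ ContinuousLinearMap.opNorm_nonneg _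
  have hd0 : 0 ≤ d := hd ▸ ContinuousLinearMap.opNorm_nonneg _
  -- Key Clifford estimate: each S_p ⊗ 1 is dominated by X_H
  have key1 : ∀ (p : Fin n) (ξ z : PiLp 2 (fun _ : Fin m => E)),
      (∀ l, z l = S p (ξ l)) → ‖z‖ ≤ c * ‖ξ‖ := by
    intro p ξ z hz
    obtain ⟨g, hg⟩ : ∃ g : PiLp 2 (fun _ : Fin m => E),
        ∀ l, g l = ∑ l', γ p l l' • ξ l' :=
      ⟨(WithLp.equiv 2 _).symm fun l => ∑ l', γ p l l' • ξ l', fun _ => rfl⟩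
    obtain ⟨g2, hg2⟩ : ∃ g2 : PiLp 2 (fun _ : Fin m => E),
        ∀ i, g2 i = ∑ l, γ p i l • XH ξ l :=
      ⟨(WithLp.equiv 2 _).symm fun i => ∑ l, γ p i l • XH ξ l, fun _ => rfl⟩
    have hγp : (γ p)ᴴ * γ p = 1 := by rw [hsa p]; exact hunit p
    have hgn : ‖g‖ = ‖ξ‖ := aux_isometry (γ p) hγp ξ g hg
    have hg2n : ‖g2‖ = ‖XH ξ‖ := aux_isometry (γ p) hγp (XH ξ) g2 hg2
    have hkey := clifford_step γ hunit hanti S p ξ (XH ξ) g (XH g)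
      (hXHS ξ) hg (hXHS g)
    have heq : XH g + g2 = (2 : ℂ) • z := by
      ext i
      rw [PiLp.add_apply, PiLp.smul_apply, hg2, hz]
      exact hkey i
    have hn2 : ‖(2:ℂ) • z‖ = 2 * ‖z‖ := by
      rw [norm_smul]; norm_num
    have : 2 * ‖z‖ ≤ c * ‖ξ‖ + c * ‖ξ‖ := by
      rw [← hn2, ← heq]
      refine le_trans (norm_add_le _ _) ?_
      gcongr
      · calc ‖XH g‖ ≤ c * ‖g‖ := XH.le_opNorm g
          _ = c * ‖ξ‖ := by rw [hgn]
      · rw [hg2n]; exact XH.le_opNorm ξ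
    linarith
  -- main bound, pointwise
  have hfac : (0:ℝ) ≤ (1 + (n : ℝ) * d) * c := by positivity
  refine ContinuousLinearMap.opNorm_le_bound _ hfac fun ξ => ?_
  obtain ⟨z, hz⟩ : ∃ z : Fin n → PiLp 2 (fun _ : Fin m => E),
      ∀ p l, z p l = S p (ξ l) :=
    ⟨fun p => (WithLp.equiv 2 _).symm fun l => S p (ξ l), fun _ _ => rfl⟩
  obtain ⟨y, hy⟩ : ∃ y : Fin m → PiLp 2 (fun _ : Fin n => E),
      ∀ l k, y l k = T k (ξ l) :=
    ⟨fun l => (WithLp.equiv 2 _).symm fun k => T k (ξ l), fun _ _ => rfl⟩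
  obtain ⟨u, hu⟩ : ∃ u : Fin m → PiLp 2 (fun _ : Fin n => E),
      ∀ l p, u l p = S p (ξ l) :=
    ⟨fun l => (WithLp.equiv 2 _).symm fun p => S p (ξ l), fun _ _ => rfl⟩
  obtain ⟨v, hv⟩ : ∃ v : Fin m → PiLp 2 (fun _ : Fin n => E),
      ∀ l, v l = (1 - H' * Hinv) (u l) := ⟨_, fun _ => rfl⟩
  obtain ⟨zv, hzv⟩ : ∃ zv : Fin n → PiLp 2 (fun _ : Fin m => E),
      ∀ j l, zv j l = S' j (ξ l) - S j (ξ l) :=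
    ⟨fun j => (WithLp.equiv 2 _).symm fun l => S' j (ξ l) - S j (ξ l), fun _ _ => rfl⟩
  obtain ⟨w, hw⟩ : ∃ w : Fin n → PiLp 2 (fun _ : Fin m => E),
      ∀ j i, w j i = ∑ l, γ j i l • zv j l :=
    ⟨fun j => (WithLp.equiv 2 _).symm fun i => ∑ l, γ j i l • zv j l, fun _ _ => rfl⟩
  -- u l = H (y l)
  have hul : ∀ l, u l = H (y l) := by
    intro l
    ext p
    rw [hH (y l) p, hu]
    rw [hSa]
    exact Finset.sum_congr rfl fun k _ => by rw [hy]
  have hHinvu : ∀ l, Hinv (u l) = y l := by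
    intro l
    rw [hul l, ← ContinuousLinearMap.mul_apply, hHinv2, ContinuousLinearMap.one_apply]
  have hvp : ∀ l (p : Fin n), v l p = S p (ξ l) - S' p (ξ l) := by
    intro l p
    rw [hv l, ContinuousLinearMap.sub_apply, ContinuousLinearMap.one_apply,
      ContinuousLinearMap.mul_apply, hHinvu l, PiLp.sub_apply, hu, hH' (y l) p, hS'a]
    congr 1
    exact Finset.sum_congr rfl fun k _ => by rw [hy]
  have hvn : ∀ l, ‖v l‖ ≤ d * ‖u l‖ := by
    intro l
    rw [hv l]
    exact (1 - H' * Hinv).le_opNorm (u l)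
  -- decomposition
  have hdecomp : XH' ξ = XH ξ + ∑ j, w j := by
    ext i
    rw [hXH'S ξ i, PiLp.add_apply, piLp_sum_apply, hXHS ξ i, ← Finset.sum_add_distrib]
    refine Finset.sum_congr rfl fun j _ => ?_
    rw [hw, ← Finset.sum_add_distrib]
    refine Finset.sum_congr rfl fun l _ => ?_
    rw [hzv, ← smul_add, add_sub_cancel]
  -- norms of w j
  have hwn : ∀ j, ‖w j‖ = ‖zv j‖ := by
    intro j
    exact aux_isometry (γ j) (by rw [hsa j]; exact hunit j) (zv j) (w j) (hw j)
  -- square sums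
  have hzvsq : ∀ j, ‖zv j‖ ^ 2 = ∑ l, ‖v l j‖ ^ 2 := by
    intro j
    rw [PiLp.norm_sq_eq_of_L2]
    refine Finset.sum_congr rfl fun l _ => ?_
    rw [hzv, hvp, norm_sub_rev]
  have husq : ∀ l, ‖u l‖ ^ 2 = ∑ p, ‖S p (ξ l)‖ ^ 2 := by
    intro l
    rw [PiLp.norm_sq_eq_of_L2]
    exact Finset.sum_congr rfl fun p _ => by rw [hu]
  have hzsq : ∀ p, ‖z p‖ ^ 2 = ∑ l, ‖S p (ξ l)‖ ^ 2 := by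
    intro p
    rw [PiLp.norm_sq_eq_of_L2]
    exact Finset.sum_congr rfl fun l _ => by rw [hz]
  have hsum2 : ∑ j, ‖zv j‖ ^ 2 ≤ d ^ 2 * ((n:ℝ) * (c * ‖ξ‖) ^ 2) := by
    calc ∑ j, ‖zv j‖ ^ 2 = ∑ j, ∑ l, ‖v l j‖ ^ 2 :=
          Finset.sum_congr rfl fun j _ => hzvsq j
      _ = ∑ l, ∑ j, ‖v l j‖ ^ 2 := Finset.sum_comm
      _ = ∑ l, ‖v l‖ ^ 2 :=
          Finset.sum_congr rfl fun l _ => (PiLp.norm_sq_eq_of_L2 _ (v l)).symm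
      _ ≤ ∑ l, (d * ‖u l‖) ^ 2 := by
          refine Finset.sum_le_sum fun l _ => ?_
          have := hvn l
          have h0 : (0:ℝ) ≤ ‖v l‖ := norm_nonneg _
          nlinarith
      _ = d ^ 2 * ∑ l, ‖u l‖ ^ 2 := by
          rw [Finset.mul_sum]; refine Finset.sum_congr rfl fun l _ => by ring
      _ = d ^ 2 * ∑ p, ‖z p‖ ^ 2 := by
          rw [Finset.sum_congr rfl fun l _ => husq l, Finset.sum_comm,
            Finset.sum_congr rfl fun p _ => (hzsq p).symm]
      _ ≤ d ^ 2 * ((n:ℝ) * (c * ‖ξ‖) ^ 2) := by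
          refine mul_le_mul_of_nonneg_left ?_ (by positivity)
          calc ∑ p, ‖z p‖ ^ 2 ≤ ∑ _p : Fin n, (c * ‖ξ‖) ^ 2 := by
                refine Finset.sum_le_sum fun p _ => ?_
                have h1 := key1 p ξ (z p) (hz p)
                have h0 : (0:ℝ) ≤ ‖z p‖ := norm_nonneg _
                nlinarith
            _ = (n:ℝ) * (c * ‖ξ‖) ^ 2 := by
                rw [Finset.sum_const, Finset.card_univ, Fintype.card_fin, nsmul_eq_mul]
  have hsum1 : ∑ j, ‖zv j‖ ≤ (n:ℝ) * d * (c * ‖ξ‖) := by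
    have hCS : (∑ j, ‖zv j‖) ^ 2 ≤ (n:ℝ) * ∑ j, ‖zv j‖ ^ 2 := by
      have := sq_sum_le_card_mul_sum_sq (s := (Finset.univ : Finset (Fin n)))
        (f := fun j => ‖zv j‖)
      simpa [Finset.card_univ, Fintype.card_fin] using this
    have h1 : (∑ j, ‖zv j‖) ^ 2 ≤ ((n:ℝ) * d * (c * ‖ξ‖)) ^ 2 := by
      calc (∑ j, ‖zv j‖) ^ 2 ≤ (n:ℝ) * ∑ j, ‖zv j‖ ^ 2 := hCS
        _ ≤ (n:ℝ) * (d ^ 2 * ((n:ℝ) * (c * ‖ξ‖) ^ 2)) := by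
            refine mul_le_mul_of_nonneg_left hsum2 (by positivity)
        _ = ((n:ℝ) * d * (c * ‖ξ‖)) ^ 2 := by ring
    have h2 : (0:ℝ) ≤ ∑ j, ‖zv j‖ := Finset.sum_nonneg fun j _ => norm_nonneg _
    have h3 : (0:ℝ) ≤ (n:ℝ) * d * (c * ‖ξ‖) := by positivity
    nlinarith
  -- final assembly
  calc ‖XH' ξ‖ = ‖XH ξ + ∑ j, w j‖ := by rw [hdecomp]
    _ ≤ ‖XH ξ‖ + ‖∑ j, w j‖ := norm_add_le _ _
    _ ≤ c * ‖ξ‖ + ∑ j, ‖w j‖ := by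
        gcongr
        · exact XH.le_opNorm ξ
        · exact norm_sum_le _ _
    _ = c * ‖ξ‖ + ∑ j, ‖zv j‖ := by
        rw [Finset.sum_congr rfl fun j _ => hwn j]
    _ ≤ c * ‖ξ‖ + (n:ℝ) * d * (c * ‖ξ‖) := by linarith
    _ = (1 + (n:ℝ) * d) * c * ‖ξ‖ := by ring
end
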